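/- arXiv:1608.02788 — 6 statements merged into one kernel-verified Lean document; each statement's English description precedes it below -/
import Mathlib

section
/- Let F be a field and x an element of a finite field extension of F. Then there exists a positive integer m such that the intersection of the fields F(x^n) over all positive integers n equals F(x^m). -/
/-!
The fields `F⟮xⁿ⟯` for `n > 0` form a downward directed family, since `F⟮x^(mn)⟯` lies in both
`F⟮x^m⟯` and `F⟮x^n⟯`. Intermediate fields of a finite extension satisfy the descending chain
condition, so this family has a minimal member, and by directedness it is the least one,
hence equal to the intersection.
-/

open IntermediateField

theorem DirectedOn.sInf_mem {α : Type*} [CompleteLattice α] [WellFoundedLT α] {s : Set α}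
    (hs : s.Nonempty) (hdir : DirectedOn (· ≥ ·) s) : sInf s ∈ s := by
  obtain ⟨a, ha⟩ := exists_minimal_of_wellFoundedLT (· ∈ s) hs
  exact (hdir.minimal_iff_isLeast.mp ha).csInf_eq ▸ ha.1

namespace IntermediateField

variable {F L : Type*} [Field F] [Field L] [Algebra F L]

instance wellFoundedLT [FiniteDimensional F L] : WellFoundedLT (IntermediateField F L) :=
  (Subalgebra.toSubmodule.strictMono.comp toSubalgebra_strictMono).wellFoundedLT

theorem adjoin_simple_pow_le_of_dvd (x : L) {m n : ℕ} (hmn : m ∣ n) : F⟮x ^ n⟯ ≤ F⟮x ^ m⟯ := by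
  obtain ⟨k, rfl⟩ := hmn
  rw [adjoin_simple_le_iff, pow_mul]
  exact pow_mem (mem_adjoin_simple_self F (x ^ m)) k

theorem directedOn_adjoin_simple_pow (x : L) :
    DirectedOn (· ≥ ·) ((fun n => F⟮x ^ n⟯) '' {n | 0 < n}) := by
  refine directedOn_image.mpr fun m hm n hn => ⟨m * n, Nat.mul_pos hm hn, ?_, ?_⟩
  · exact adjoin_simple_pow_le_of_dvd x (dvd_mul_right m n)
  · exact adjoin_simple_pow_le_of_dvd x (dvd_mul_left n m)

end IntermediateField

/-- Let `F` be a field and `x` an element of a finite field extension `L` of `F`.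
Then there exists a positive integer `m` such that the intersection of the fields
`F(xⁿ)` over all positive integers `n` equals `F(x^m)`. -/
theorem stmt0 {F L : Type*} [Field F] [Field L] [Algebra F L] [FiniteDimensional F L]
    (x : L) :
    ∃ m : ℕ, 0 < m ∧ (⨅ (n : ℕ) (_ : 0 < n), F⟮x ^ n⟯) = F⟮x ^ m⟯ := by
  have hne : ((fun n => F⟮x ^ n⟯) '' {n | 0 < n}).Nonempty := ⟨_, 1, Nat.one_pos, rfl⟩
  obtain ⟨m, hm, hinf⟩ := (directedOn_adjoin_simple_pow x).sInf_mem hne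
  rw [sInf_image] at hinf
  exact ⟨m, hm, hinf.symm⟩
end

section
/- Let F be a field, L/F a finite extension, and x ∈ L. If m is a positive integer minimizing the degree [F(x^m) : F] among all positive integers, then F(x^m) ⊆ F(x^n) for every positive integer n. -/
open IntermediateField

theorem IntermediateField.adjoin_simple_pow_le_of_dvd_s1 {F L : Type*} [Field F] [Field L]
    [Algebra F L] (x : L) {k n : ℕ} (hkn : k ∣ n) : F⟮x ^ n⟯ ≤ F⟮x ^ k⟯ := by
  obtain ⟨j, rfl⟩ := hkn
  rw [adjoin_simple_le_iff, pow_mul]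
  exact pow_mem (mem_adjoin_simple_self F _) j

/-- Let `F` be a field, `L/F` a finite extension, and `x ∈ L`. If `m` is a positive
integer minimizing the degree `[F(x^m) : F]` among all positive integers, then
`F(x^m) ⊆ F(xⁿ)` for every positive integer `n`. -/
theorem stmt1 {F L : Type*} [Field F] [Field L] [Algebra F L] [FiniteDimensional F L]
    (x : L) (m : ℕ) (hm : 0 < m)
    (hmin : ∀ n : ℕ, 0 < n →
      Module.finrank F F⟮x ^ m⟯ ≤ Module.finrank F F⟮x ^ n⟯) :
    ∀ n : ℕ, 0 < n → F⟮x ^ m⟯ ≤ F⟮x ^ n⟯ := by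
  intro n hn
  have hmn : F⟮x ^ (m * n)⟯ = F⟮x ^ m⟯ :=
    eq_of_le_of_finrank_le (adjoin_simple_pow_le_of_dvd_s1 x (dvd_mul_right m n))
      (hmin (m * n) (Nat.mul_pos hm hn))
  exact hmn ▸ adjoin_simple_pow_le_of_dvd_s1 x (dvd_mul_left n m)
end

section
/- Let A be a Dedekind domain with distinct maximal ideals 𝔭 and 𝔮. Let M, N₁, N₂ be torsion-free A-modules and f₁ : M → N₁, f₂ : M → N₂ injective A-linear maps such that every element of the torsion submodule of coker(f₁) is annihilated by a power of 𝔭, and every element of the torsion submodule of coker(f₂) is annihilated by a power of 𝔮. Then the image of (f₁, f₂) : M → N₁ × N₂ is saturated, i.e. coker((f₁,f₂)) is torsion free. -/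
/-!
If `a • (n₁, n₂) = (f₁ m, f₂ m)`, then `n₁` is `a`-torsion modulo `range f₁` and `n₂` modulo
`range f₂`, so `p • n₁ = f₁ u` and `q • n₂ = f₂ v` for some `p ∈ 𝔭 ^ k` and `q ∈ 𝔮 ^ l`; as these
powers are coprime we may take `p + q = 1`. Injectivity and torsion-freeness then force
`(n₁, n₂) = (f₁ (u + v), f₂ (u + v))`.
-/

namespace Submodule.Quotient

theorem smul_mk_eq_zero_iff {R M : Type*} [Ring R] [AddCommGroup M] [Module R M]
    {P : Submodule R M} (a : R) (x : M) : a • (mk x : M ⧸ P) = 0 ↔ a • x ∈ P := by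
  rw [← mk_smul, mk_eq_zero]

end Submodule.Quotient

theorem Ideal.isCoprime_pow_of_isMaximal_of_ne {R : Type*} [CommRing R] {I J : Ideal R}
    (hI : I.IsMaximal) (hJ : J.IsMaximal) (hIJ : I ≠ J) (k l : ℕ) :
    IsCoprime (I ^ k) (J ^ l) :=
  (Ideal.isCoprime_iff_sup_eq.mpr (hI.coprime_of_ne hJ hIJ)).pow

namespace LinearMap

variable {R M N₁ N₂ : Type*} [CommRing R] [AddCommGroup M] [Module R M]
  [AddCommGroup N₁] [Module R N₁] [AddCommGroup N₂] [Module R N₂]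
  {f₁ : M →ₗ[R] N₁} {f₂ : M →ₗ[R] N₂}

theorem mem_range_prod_iff {n : N₁ × N₂} :
    n ∈ range (f₁.prod f₂) ↔ ∃ m, f₁ m = n.1 ∧ f₂ m = n.2 :=
  mem_range.trans <| exists_congr fun _ => Prod.ext_iff

theorem apply_eq_smul_of_smul_eq [NoZeroSMulDivisors R N₂] {a p : R} (ha : a ≠ 0)
    (h₁ : Function.Injective f₁) {m u : M} {x : N₁} {y : N₂}
    (hm₁ : f₁ m = a • x) (hm₂ : f₂ m = a • y) (hu : f₁ u = p • x) : f₂ u = p • y := by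
  have hau : a • u = p • m := h₁ <| by rw [map_smul, map_smul, hu, hm₁, smul_comm]
  have hann : a • (f₂ u - p • y) = 0 := by
    rw [smul_sub, ← map_smul, hau, map_smul, hm₂, smul_comm, sub_self]
  exact sub_eq_zero.mp ((eq_zero_or_eq_zero_of_smul_eq_zero hann).resolve_left ha)

theorem mem_range_prod_of_smul_mem [NoZeroSMulDivisors R N₁] [NoZeroSMulDivisors R N₂]
    (h₁ : Function.Injective f₁) (h₂ : Function.Injective f₂)
    {a p q : R} (ha : a ≠ 0) (hpq : p + q = 1) {n : N₁ × N₂}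
    (han : a • n ∈ range (f₁.prod f₂)) (hp : p • n.1 ∈ range f₁) (hq : q • n.2 ∈ range f₂) :
    n ∈ range (f₁.prod f₂) := by
  obtain ⟨m, hm₁, hm₂⟩ := mem_range_prod_iff.mp han
  obtain ⟨u, hu⟩ := hp
  obtain ⟨v, hv⟩ := hq
  have hu₂ : f₂ u = p • n.2 := apply_eq_smul_of_smul_eq ha h₁ hm₁ hm₂ hu
  have hv₁ : f₁ v = q • n.1 := apply_eq_smul_of_smul_eq ha h₂ hm₂ hm₁ hv
  refine mem_range_prod_iff.mpr ⟨u + v, ?_, ?_⟩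
  · rw [map_add, hu, hv₁, ← add_smul, hpq, one_smul]
  · rw [map_add, hu₂, hv, ← add_smul, hpq, one_smul]

end LinearMap

theorem stmt4_general {A : Type*} [CommRing A]
    (𝔭 𝔮 : Ideal A) (hp : 𝔭.IsMaximal) (hq : 𝔮.IsMaximal) (hpq : 𝔭 ≠ 𝔮)
    {M N₁ N₂ : Type*} [AddCommGroup M] [Module A M]
    [AddCommGroup N₁] [Module A N₁] [AddCommGroup N₂] [Module A N₂]
    [NoZeroSMulDivisors A N₁] [NoZeroSMulDivisors A N₂]
    (f₁ : M →ₗ[A] N₁) (f₂ : M →ₗ[A] N₂)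
    (h₁ : Function.Injective f₁) (h₂ : Function.Injective f₂)
    (ht₁ : ∀ x : N₁ ⧸ LinearMap.range f₁,
      (∃ a : A, a ≠ 0 ∧ a • x = 0) → ∃ k : ℕ, ∀ a ∈ 𝔭 ^ k, a • x = 0)
    (ht₂ : ∀ x : N₂ ⧸ LinearMap.range f₂,
      (∃ a : A, a ≠ 0 ∧ a • x = 0) → ∃ k : ℕ, ∀ a ∈ 𝔮 ^ k, a • x = 0) :
    ∀ (x : (N₁ × N₂) ⧸ LinearMap.range (f₁.prod f₂)) (a : A),
      a ≠ 0 → a • x = 0 → x = 0 := by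
  open Submodule.Quotient in
  intro x a ha hax
  obtain ⟨n, rfl⟩ := mk_surjective _ x
  rw [smul_mk_eq_zero_iff] at hax
  obtain ⟨m, hm₁, hm₂⟩ := LinearMap.mem_range_prod_iff.mp hax
  obtain ⟨k, hk⟩ := ht₁ (mk n.1) ⟨a, ha, (smul_mk_eq_zero_iff a n.1).mpr ⟨m, hm₁⟩⟩
  obtain ⟨l, hl⟩ := ht₂ (mk n.2) ⟨a, ha, (smul_mk_eq_zero_iff a n.2).mpr ⟨m, hm₂⟩⟩
  obtain ⟨p, hpk, q, hql, hpq₁⟩ :=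
    Ideal.isCoprime_iff_exists.mp (Ideal.isCoprime_pow_of_isMaximal_of_ne hp hq hpq k l)
  rw [mk_eq_zero]
  exact LinearMap.mem_range_prod_of_smul_mem h₁ h₂ ha hpq₁ hax
    ((smul_mk_eq_zero_iff p n.1).mp (hk p hpk)) ((smul_mk_eq_zero_iff q n.2).mp (hl q hql))

/-- Let `A` be a Dedekind domain with distinct maximal ideals `𝔭` and `𝔮`. Let
`M, N₁, N₂` be torsion-free `A`-modules and `f₁ : M → N₁`, `f₂ : M → N₂` injective
`A`-linear maps such that every torsion element of `coker f₁` is annihilated by a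
power of `𝔭` and every torsion element of `coker f₂` is annihilated by a power of `𝔮`.
Then the image of `(f₁, f₂) : M → N₁ × N₂` is saturated, i.e. its cokernel is
torsion free. -/
theorem stmt4 {A : Type*} [CommRing A] [IsDomain A] [IsDedekindDomain A]
    (𝔭 𝔮 : Ideal A) (hp : 𝔭.IsMaximal) (hq : 𝔮.IsMaximal) (hpq : 𝔭 ≠ 𝔮)
    {M N₁ N₂ : Type*} [AddCommGroup M] [Module A M]
    [AddCommGroup N₁] [Module A N₁] [AddCommGroup N₂] [Module A N₂]
    [NoZeroSMulDivisors A M] [NoZeroSMulDivisors A N₁] [NoZeroSMulDivisors A N₂]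
    (f₁ : M →ₗ[A] N₁) (f₂ : M →ₗ[A] N₂)
    (h₁ : Function.Injective f₁) (h₂ : Function.Injective f₂)
    (ht₁ : ∀ x : N₁ ⧸ LinearMap.range f₁,
      (∃ a : A, a ≠ 0 ∧ a • x = 0) → ∃ k : ℕ, ∀ a ∈ 𝔭 ^ k, a • x = 0)
    (ht₂ : ∀ x : N₂ ⧸ LinearMap.range f₂,
      (∃ a : A, a ≠ 0 ∧ a • x = 0) → ∃ k : ℕ, ∀ a ∈ 𝔮 ^ k, a • x = 0) :
    ∀ (x : (N₁ × N₂) ⧸ LinearMap.range (f₁.prod f₂)) (a : A),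
      a ≠ 0 → a • x = 0 → x = 0 :=
  stmt4_general 𝔭 𝔮 hp hq hpq f₁ f₂ h₁ h₂ ht₁ ht₂
end

section
/- Let A be a Dedekind domain, Q a torsion-free A-module, and P ⊆ Q a saturated submodule. Then for every maximal ideal 𝔭 of A, the induced map P/𝔭P → Q/𝔭Q is injective. -/
/-! If `I * J = (a)` with `a` regular on `Q` and `x ∈ P ⊓ I Q`, then `J x ⊆ P ⊓ a Q = a P` by
saturation, so `a x ∈ I J x ⊆ a (I P)` and cancelling `a` gives `x ∈ I P`. In a Dedekind domain
every nonzero ideal divides a nonzero principal ideal, so this applies to every `I`. -/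

open scoped Pointwise

namespace Submodule

variable {A Q : Type*} [CommRing A] [AddCommGroup Q] [Module A Q] {P : Submodule A Q} {a : A}

theorem inf_span_singleton_smul_top_le (hsat : ∀ q, a • q ∈ P → q ∈ P) :
    P ⊓ Ideal.span {a} • ⊤ ≤ Ideal.span {a} • P := by
  intro x hx
  obtain ⟨hxP, hx⟩ := mem_inf.1 hx
  rw [ideal_span_singleton_smul, mem_smul_pointwise_iff_exists] at hx ⊢
  obtain ⟨q, -, rfl⟩ := hx
  exact ⟨q, hsat q hxP, rfl⟩

theorem inf_smul_top_eq_smul_of_mul_eq_span {I J : Ideal A} (hIJ : I * J = Ideal.span {a})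
    (ha : IsSMulRegular Q a) (hsat : ∀ q, a • q ∈ P → q ∈ P) :
    P ⊓ I • ⊤ = I • P := by
  refine le_antisymm ?_ (le_inf smul_le_right (smul_mono_right _ le_top))
  intro x hx
  obtain ⟨hxP, hxI⟩ := mem_inf.1 hx
  have hJx : J • (A ∙ x) ≤ Ideal.span {a} • P := calc
    J • (A ∙ x) ≤ P ⊓ Ideal.span {a} • ⊤ := by
      refine le_inf (smul_le_right.trans ((span_singleton_le_iff_mem _ _).2 hxP)) ?_
      rw [← hIJ, mul_comm, Submodule.mul_smul]
      exact smul_mono_right _ ((span_singleton_le_iff_mem _ _).2 hxI)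
    _ ≤ Ideal.span {a} • P := inf_span_singleton_smul_top_le hsat
  have hax : Ideal.span {a} • (A ∙ x) ≤ a • (I • P) := calc
    Ideal.span {a} • (A ∙ x) = I • J • (A ∙ x) := by rw [← hIJ, Submodule.mul_smul]
    _ ≤ I • Ideal.span {a} • P := smul_mono_right _ hJx
    _ = a • (I • P) := by
      rw [← Submodule.mul_smul, mul_comm, Submodule.mul_smul, ideal_span_singleton_smul]
  obtain ⟨z, hz, hzx⟩ := (mem_smul_pointwise_iff_exists _ _ _).1 <|
    hax (smul_mem_smul (Ideal.mem_span_singleton_self a) (mem_span_singleton_self x))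
  exact ha hzx ▸ hz

theorem inf_smul_top_eq_smul_of_isDedekindDomain [IsDedekindDomain A] [NoZeroSMulDivisors A Q]
    (hsat : ∀ (a : A) (q : Q), a ≠ 0 → a • q ∈ P → q ∈ P) (I : Ideal A) :
    P ⊓ I • ⊤ = I • P := by
  rcases eq_or_ne I ⊥ with rfl | hI
  · simp
  obtain ⟨a, haI, ha0⟩ := exists_mem_ne_zero_of_ne_bot hI
  obtain ⟨J, hJ⟩ := Ideal.dvd_span_singleton.2 haI
  exact inf_smul_top_eq_smul_of_mul_eq_span hJ.symm (smul_right_injective Q ha0) (hsat a · ha0)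

end Submodule

theorem stmt5_general {A : Type*} [CommRing A] [IsDedekindDomain A]
    {Q : Type*} [AddCommGroup Q] [Module A Q] [NoZeroSMulDivisors A Q]
    (P : Submodule A Q) (hsat : ∀ (a : A) (q : Q), a ≠ 0 → a • q ∈ P → q ∈ P)
    (𝔭 : Ideal A) :
    P ⊓ 𝔭 • (⊤ : Submodule A Q) = 𝔭 • P :=
  P.inf_smul_top_eq_smul_of_isDedekindDomain hsat 𝔭

/-- Let `A` be a Dedekind domain, `Q` a torsion-free `A`-module, and `P ⊆ Q` a saturated
submodule (i.e. `Q/P` is torsion free: `a • q ∈ P` with `a ≠ 0` implies `q ∈ P`).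
Then for every maximal ideal `𝔭` of `A`, the induced map `P/𝔭P → Q/𝔭Q` is injective,
equivalently `P ⊓ 𝔭Q = 𝔭P`. -/
theorem stmt5 {A : Type*} [CommRing A] [IsDomain A] [IsDedekindDomain A]
    {Q : Type*} [AddCommGroup Q] [Module A Q] [NoZeroSMulDivisors A Q]
    (P : Submodule A Q) (hsat : ∀ (a : A) (q : Q), a ≠ 0 → a • q ∈ P → q ∈ P)
    (𝔭 : Ideal A) (hm : 𝔭.IsMaximal) :
    P ⊓ 𝔭 • (⊤ : Submodule A Q) = 𝔭 • P :=
  stmt5_general P hsat 𝔭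
end

section
/- Let L be a local field with valuation ring O, uniformizer π, and residue field k. Let L'/L be an unramified extension of degree n with valuation ring O' and residue field k'. Fix α ∈ O' whose residue class generates k' over k, and regard O' ⊆ Mat_n(O) via the regular representation. Then for every i ≥ 1 and every matrix δ ∈ Mat_n(O) with δ ≡ 1 + π^i α (mod π^{i+1} Mat_n(O)), the L-subalgebra of Mat_n(L) generated by δ is a field isomorphic to L'; in particular δ has n distinct eigenvalues generating an unramified extension of degree n of L. -/
/-!
Write `δ = 1 + π^i β` with `β ≡ M_α (mod π)`. The characteristic polynomial `f` of `β` then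
reduces to that of `M_α`, which is the minimal polynomial of `ᾱ` over `k` since `[k' : k] = n`.
So `f̄` is irreducible and separable, hence so is `f` over `L`, and `L[δ] = L[β] ≅ L[X]/(f)`.
As a finite free `O`-module, `O'` is complete; by Hensel's lemma `f` has a root `a ∈ O'` lifting
`ᾱ`, Nakayama's lemma gives `O' = O[a]`, and therefore `L[X]/(f) ≅ Frac O'`.
-/

open Polynomial IsLocalRing

theorem Module.Basis.mem_ideal_smul_top_iff {R M ι : Type*} [CommRing R] [AddCommGroup M]
    [Module R M] (b : Module.Basis ι R M) (I : Ideal R) (x : M) :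
    x ∈ I • (⊤ : Submodule R M) ↔ ∀ i, b.repr x i ∈ I := by
  rw [← b.span_eq, Submodule.mem_ideal_smul_span_iff_exists_sum]
  constructor
  · rintro ⟨a, ha, rfl⟩ i
    rw [← Finsupp.linearCombination_apply, b.repr_linearCombination]
    exact ha i
  · intro h
    exact ⟨b.repr x, h, b.linearCombination_repr x⟩

theorem Module.Basis.isPrecomplete {R M ι : Type*} [CommRing R] [AddCommGroup M] [Module R M]
    [Finite ι] {I : Ideal R} [IsPrecomplete I R] (b : Module.Basis ι R M) :
    IsPrecomplete I M := by
  refine ⟨fun {f} hf => ?_⟩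
  have hcoord (i : ι) :
      ∃ l, ∀ j, b.repr (f j) i ≡ l [SMOD (I ^ j • ⊤ : Submodule R R)] := by
    refine IsPrecomplete.prec ‹_› fun {m n} hmn => ?_
    have := hf hmn
    rw [SModEq.sub_mem, b.mem_ideal_smul_top_iff] at this
    simpa [SModEq.sub_mem] using this i
  choose l hl using hcoord
  have := Fintype.ofFinite ι
  refine ⟨∑ i, l i • b i, fun j => ?_⟩
  rw [SModEq.sub_mem, b.mem_ideal_smul_top_iff]
  intro i
  have := hl i j
  rw [SModEq.sub_mem, smul_eq_mul, Ideal.mul_top] at this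
  rwa [map_sub, Finsupp.sub_apply, b.repr_sum_self]

theorem isAdicComplete_maximalIdeal_of_basis {O O' ι : Type*} [CommRing O] [IsNoetherianRing O]
    [IsLocalRing O] [IsAdicComplete (maximalIdeal O) O] [CommRing O'] [IsLocalRing O']
    [Algebra O O'] [Finite ι]
    (hunram : maximalIdeal O' = (maximalIdeal O).map (algebraMap O O'))
    (b : Module.Basis ι O O') : IsAdicComplete (maximalIdeal O') O' := by
  have : Module.Finite O O' := .of_basis b
  have : IsPrecomplete (maximalIdeal O) O' := b.isPrecomplete
  rw [hunram, IsAdicComplete.map_algebraMap_iff]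
  exact {}

theorem minpoly.natDegree_eq_finrank_of_adjoin_eq_top {K S : Type*} [Field K] [CommRing S]
    [Algebra K S] {x : S} (hx : IsIntegral K x) (hx' : Algebra.adjoin K {x} = ⊤) :
    (minpoly K x).natDegree = Module.finrank K S := by
  rw [(PowerBasis.ofAdjoinEqTop hx hx').finrank, PowerBasis.ofAdjoinEqTop_dim]

theorem Algebra.adjoin_algebraMap_add_smul {K A : Type*} [Field K] [Ring A] [Algebra K A]
    (r : K) {c : K} (hc : c ≠ 0) (x : A) :
    Algebra.adjoin K {algebraMap K A r + c • x} = Algebra.adjoin K {x} := by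
  set y := algebraMap K A r + c • x
  apply le_antisymm <;> rw [Algebra.adjoin_le_iff, Set.singleton_subset_iff]
  · exact add_mem (Subalgebra.algebraMap_mem _ r)
      (Subalgebra.smul_mem _ (Algebra.self_mem_adjoin_singleton K x) c)
  · have hx : x = c⁻¹ • (y - algebraMap K A r) := by
      rw [add_sub_cancel_left, inv_smul_smul₀ hc]
    rw [hx]
    exact Subalgebra.smul_mem _
      (sub_mem (Algebra.self_mem_adjoin_singleton K y) (Subalgebra.algebraMap_mem _ r)) _

theorem Algebra.aeval_charpoly_leftMulMatrix {R S ι : Type*} [CommRing R] [CommRing S]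
    [Algebra R S] [Fintype ι] [DecidableEq ι] (b : Module.Basis ι R S) (x : S) :
    aeval x (leftMulMatrix b x).charpoly = 0 := by
  have := Module.Free.of_basis b
  have := Module.Finite.of_basis b
  rw [Algebra.leftMulMatrix_apply, LinearMap.charpoly_toMatrix]
  exact Algebra.aeval_self_charpoly_lmul x

theorem Matrix.exists_eq_one_add_pow_smul {R ι : Type*} [CommRing R] [DecidableEq ι] {π : R}
    {i : ℕ} {δ M : Matrix ι ι R}
    (h : ∀ a b, δ a b - (1 + π ^ i • M) a b ∈ Ideal.span {π ^ (i + 1)}) :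
    ∃ β : Matrix ι ι R, δ = 1 + π ^ i • β ∧ ∃ E : Matrix ι ι R, β = M + π • E := by
  choose E hE using fun a b => Ideal.mem_span_singleton.mp (h a b)
  refine ⟨M + π • Matrix.of E, Matrix.ext fun a b => ?_, Matrix.of E, rfl⟩
  simp only [Matrix.add_apply, Matrix.smul_apply, Matrix.of_apply, smul_eq_mul] at hE ⊢
  linear_combination hE a b

theorem Polynomial.Monic.irreducible_separable_map_fractionRing {O k : Type*} [CommRing O]
    [IsDomain O] [IsIntegrallyClosed O] [Field k] (φ : O →+* k) {f : O[X]} (hf : f.Monic)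
    (hirr : Irreducible (f.map φ)) (hsep : (f.map φ).Separable) :
    Irreducible (f.map (algebraMap O (FractionRing O))) ∧
      (f.map (algebraMap O (FractionRing O))).Separable := by
  have hirrK := (hf.irreducible_iff_irreducible_map_fraction_map (K := FractionRing O)).mp
    (hf.irreducible_of_irreducible_map φ f hirr)
  refine ⟨hirrK, ?_⟩
  have hder := (separable_iff_derivative_ne_zero hirr).mp hsep
  rw [derivative_map] at hder
  rw [separable_iff_derivative_ne_zero hirrK, derivative_map]
  exact fun h => hder <| by
    rw [(Polynomial.map_eq_zero_iff (IsFractionRing.injective O (FractionRing O))).mp h,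
      Polynomial.map_zero]

section Residue

variable {O O' : Type*} [CommRing O] [IsLocalRing O] [CommRing O'] [IsLocalRing O']
  [Algebra O O'] [IsLocalHom (algebraMap O O')]

theorem residue_aeval (x : O') (P : O[X]) :
    residue O' (aeval x P) = aeval (residue O' x) (P.map (residue O)) := by
  rw [← ResidueField.algebraMap_eq (R := O), aeval_map_algebraMap]
  exact (aeval_algHom_apply (IsScalarTower.toAlgHom O O' (ResidueField O')) x P).symm

theorem finrank_residueField_of_maximalIdeal_eq_map [Module.Finite O O'] [Module.Free O O']
    (hunram : maximalIdeal O' = (maximalIdeal O).map (algebraMap O O')) :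
    Module.finrank (ResidueField O) (ResidueField O') = Module.finrank O O' := by
  rw [← IsLocalRing.finrank_quotient_map (R := O) (S := O')]
  refine Algebra.finrank_eq_of_equiv_equiv (RingEquiv.refl _) (Ideal.quotEquivOfEq hunram) ?_
  ext x
  obtain ⟨x, rfl⟩ := residue_surjective x
  rfl

theorem adjoin_residue_eq_top {α : O'}
    (hαgen : ∀ y : O', ∃ q : O[X], y - aeval α q ∈ maximalIdeal O') :
    Algebra.adjoin (ResidueField O) {residue O' α} = ⊤ := by
  refine eq_top_iff.mpr fun y _ => ?_
  obtain ⟨y, rfl⟩ := residue_surjective y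
  obtain ⟨q, hq⟩ := hαgen y
  have hres : residue O' y = residue O' (aeval α q) :=
    sub_eq_zero.mp (by rw [← map_sub, residue_eq_zero_iff]; exact hq)
  rw [hres, residue_aeval]
  exact aeval_mem_adjoin_singleton _ _

theorem map_residue_eq_minpoly [Module.Finite O O'] [Module.Free O O']
    (hunram : maximalIdeal O' = (maximalIdeal O).map (algebraMap O O')) {α : O'}
    (hαgen : ∀ y : O', ∃ q : O[X], y - aeval α q ∈ maximalIdeal O') {P : O[X]}
    (hP : P.Monic) (hdeg : P.natDegree = Module.finrank O O') (hPα : aeval α P ∈ maximalIdeal O') :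
    P.map (residue O) = minpoly (ResidueField O) (residue O' α) := by
  have hint : IsIntegral (ResidueField O) (residue O' α) := .of_finite _ _
  refine eq_of_monic_of_dvd_of_natDegree_le (minpoly.monic hint) (hP.map _)
    (minpoly.dvd _ _ ?_) ?_
  · rw [← residue_aeval, residue_eq_zero_iff]
    exact hPα
  · rw [hP.natDegree_map, hdeg, minpoly.natDegree_eq_finrank_of_adjoin_eq_top hint
      (adjoin_residue_eq_top hαgen), finrank_residueField_of_maximalIdeal_eq_map hunram]

theorem charpoly_map_residue_eq_minpoly
    (hunram : maximalIdeal O' = (maximalIdeal O).map (algebraMap O O')) {α : O'}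
    (hαgen : ∀ y : O', ∃ q : O[X], y - aeval α q ∈ maximalIdeal O') {ι : Type*}
    [Fintype ι] [DecidableEq ι] (B : Module.Basis ι O O') {β : Matrix ι ι O}
    (hβ : β.map (residue O) = (Algebra.leftMulMatrix B α).map (residue O)) :
    β.charpoly.map (residue O) = minpoly (ResidueField O) (residue O' α) := by
  have := Module.Finite.of_basis B
  have := Module.Free.of_basis B
  rw [← Matrix.charpoly_map, hβ, Matrix.charpoly_map]
  exact map_residue_eq_minpoly hunram hαgen (Matrix.charpoly_monic _)
    (by rw [Matrix.charpoly_natDegree_eq_dim, Module.finrank_eq_card_basis B])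
    (by rw [Algebra.aeval_charpoly_leftMulMatrix]; exact zero_mem _)

theorem exists_aeval_eq_zero_sub_mem_maximalIdeal [HenselianRing O' (maximalIdeal O')]
    {f : O[X]} (hf : f.Monic) {α : O'} (hsep : (f.map (residue O)).Separable)
    (hα : aeval (residue O' α) (f.map (residue O)) = 0) :
    ∃ a : O', aeval a f = 0 ∧ a - α ∈ maximalIdeal O' := by
  have hder : residue O' (aeval α (derivative f)) ≠ 0 := by
    rw [residue_aeval, ← derivative_map]
    exact hsep.aeval_derivative_ne_zero hα
  obtain ⟨a, ha, haα⟩ := HenselianRing.is_henselian (f.map (algebraMap O O')) (hf.map _) α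
    (by rw [eval_map_algebraMap, ← residue_eq_zero_iff, residue_aeval, hα])
    (by rw [derivative_map, eval_map_algebraMap]; exact isUnit_iff_ne_zero.mpr hder)
  exact ⟨a, by rwa [IsRoot, eval_map_algebraMap] at ha, haα⟩

theorem adjoin_eq_top_of_adjoin_residue_eq_top [Module.Finite O O']
    (hunram : maximalIdeal O' = (maximalIdeal O).map (algebraMap O O')) {a : O'}
    (ha : Algebra.adjoin (ResidueField O) {residue O' a} = ⊤) :
    Algebra.adjoin O {a} = ⊤ := by
  rw [← Algebra.toSubmodule_eq_top, eq_top_iff]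
  refine Submodule.le_of_le_smul_of_le_jacobson_bot Module.Finite.fg_top
    (maximalIdeal_le_jacobson _) fun y _ => ?_
  rw [Algebra.adjoin_singleton_eq_range_aeval, AlgHom.range_eq_top] at ha
  obtain ⟨q, hq⟩ := ha (residue O' y)
  obtain ⟨q, rfl⟩ := map_surjective _ residue_surjective q
  rw [← residue_aeval, eq_comm, ← sub_eq_zero, ← map_sub, residue_eq_zero_iff, hunram] at hq
  rw [← add_sub_cancel (aeval a q) y]
  refine Submodule.add_mem_sup (aeval_mem_adjoin_singleton O a) ?_
  rw [Ideal.smul_top_eq_map]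
  exact hq

theorem exists_aeval_eq_zero_adjoin_eq_top [HenselianRing O' (maximalIdeal O')]
    [Module.Finite O O'] (hunram : maximalIdeal O' = (maximalIdeal O).map (algebraMap O O'))
    {α : O'} (hαgen : ∀ y : O', ∃ q : O[X], y - aeval α q ∈ maximalIdeal O') {f : O[X]}
    (hf : f.Monic) (hfα : f.map (residue O) = minpoly (ResidueField O) (residue O' α))
    (hsep : (minpoly (ResidueField O) (residue O' α)).Separable) :
    ∃ a : O', aeval a f = 0 ∧ Algebra.adjoin O {a} = ⊤ := by
  obtain ⟨a, hfa, haα⟩ := exists_aeval_eq_zero_sub_mem_maximalIdeal hf (hfα ▸ hsep)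
    (by rw [hfα]; exact minpoly.aeval _ _)
  refine ⟨a, hfa, adjoin_eq_top_of_adjoin_residue_eq_top hunram ?_⟩
  rw [show residue O' a = residue O' α from Ideal.Quotient.eq.mpr haα]
  exact adjoin_residue_eq_top hαgen

end Residue

theorem nonempty_adjoinRoot_ringEquiv_fractionRing {O O' : Type*} [CommRing O] [IsDomain O]
    [CommRing O'] [IsDomain O'] [Algebra O O'] [FaithfulSMul O O'] {a : O'}
    (ha : Algebra.adjoin O {a} = ⊤) {f : O[X]} (hfa : aeval a f = 0)
    (hirr : Irreducible (f.map (algebraMap O (FractionRing O)))) :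
    Nonempty (AdjoinRoot (f.map (algebraMap O (FractionRing O))) ≃+* FractionRing O') := by
  have := Fact.mk hirr
  let := FractionRing.liftAlgebra O (FractionRing O')
  have := FractionRing.isScalarTower_liftAlgebra O (FractionRing O')
  have ha' :
      aeval (algebraMap O' (FractionRing O') a) (f.map (algebraMap O (FractionRing O))) = 0 := by
    rw [aeval_map_algebraMap, aeval_algebraMap_apply, hfa, map_zero]
  let φ := AdjoinRoot.liftAlgHom _ (Algebra.ofId _ _) _ ha'
  have hrange (y : O') : ∃ u, φ u = algebraMap O' (FractionRing O') y := by
    have hy : y ∈ (aeval (R := O) a).range := by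
      rw [← Algebra.adjoin_singleton_eq_range_aeval, ha]; exact Algebra.mem_top
    obtain ⟨q, rfl⟩ := hy
    refine ⟨aeval (AdjoinRoot.root _) q, ?_⟩
    rw [AlgHom.toRingHom_eq_coe, RingHom.coe_coe, ← aeval_algebraMap_apply,
      ← AdjoinRoot.liftAlgHom_root _ (Algebra.ofId _ _) _ ha']
    exact (aeval_algHom_apply (φ.restrictScalars O) _ q).symm
  refine ⟨RingEquiv.ofBijective φ ⟨φ.toRingHom.injective, fun x => ?_⟩⟩
  obtain ⟨r, s, -, rfl⟩ := IsFractionRing.div_surjective (A := O') x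
  obtain ⟨u, hu⟩ := hrange r
  obtain ⟨v, hv⟩ := hrange s
  exact ⟨u / v, by rw [map_div₀, hu, hv]⟩

section AdjoinRootCharpoly

variable {K ι : Type*} [Field K] [Fintype ι] [DecidableEq ι] (β : Matrix ι ι K)

noncomputable def adjoinRootCharpolyToMatrix : AdjoinRoot β.charpoly →ₐ[K] Matrix ι ι K :=
  Ideal.Quotient.liftₐ _ (aeval β) fun p hp => by
    obtain ⟨q, rfl⟩ := Ideal.mem_span_singleton.mp hp
    rw [map_mul, Matrix.aeval_self_charpoly, zero_mul]

theorem adjoinRootCharpolyToMatrix_root :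
    adjoinRootCharpolyToMatrix β (AdjoinRoot.root β.charpoly) = β :=
  aeval_X β

variable {β}

theorem Matrix.adjoin_one_add_smul_of_separable_charpoly [Nonempty ι]
    (hirr : Irreducible β.charpoly) (hsep : β.charpoly.Separable) {d : K} (hd : d ≠ 0) :
    IsField (Algebra.adjoin K {1 + d • β}) ∧
    Nonempty (Algebra.adjoin K {1 + d • β} ≃ₐ[K] AdjoinRoot β.charpoly) ∧
    (minpoly K (1 + d • β)).natDegree = Fintype.card ι ∧
    Irreducible (minpoly K (1 + d • β)) ∧ (minpoly K (1 + d • β)).Separable := by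
  have := Fact.mk hirr
  have := β.charpoly_monic.finite_adjoinRoot
  set θ := AdjoinRoot.root β.charpoly
  set φ := adjoinRootCharpolyToMatrix β
  have hφ : Function.Injective φ := φ.toRingHom.injective
  have hφθ : φ (1 + d • θ) = 1 + d • β := by
    rw [map_add, map_one, map_smul, adjoinRootCharpolyToMatrix_root]
  have hgen : Algebra.adjoin K {1 + d • θ} = ⊤ := by
    rw [← map_one (algebraMap K _), Algebra.adjoin_algebraMap_add_smul 1 hd,
      AdjoinRoot.adjoinRoot_eq_top]
  have hθsep : IsSeparable K θ := by
    rwa [IsSeparable, ← minpoly.eq_of_irreducible_of_monic hirr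
      (by rw [AdjoinRoot.aeval_eq, AdjoinRoot.mk_self]) β.charpoly_monic]
  have hsep' : IsSeparable K (1 + d • θ) := by
    rw [← map_one (algebraMap K _), Algebra.smul_def]
    exact Field.isSeparable_add (isSeparable_algebraMap 1)
      (Field.isSeparable_mul (isSeparable_algebraMap d) hθsep)
  have hint : IsIntegral K (1 + d • θ) := .of_finite K _
  have hrange : Algebra.adjoin K {1 + d • β} = φ.range := by
    rw [← hφθ, ← AlgHom.map_adjoin_singleton, hgen, Algebra.map_top]
  let e := (Subalgebra.equivOfEq _ _ hrange).trans (AlgEquiv.ofInjective φ hφ).symm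
  have hmin : minpoly K (1 + d • β) = minpoly K (1 + d • θ) := by
    rw [← hφθ, minpoly.algHom_eq φ hφ]
  rw [hmin]
  refine ⟨MulEquiv.isField (Field.toIsField _) e.toMulEquiv, ⟨e⟩, ?_,
    minpoly.irreducible hint, hsep'⟩
  rw [minpoly.natDegree_eq_finrank_of_adjoin_eq_top hint hgen,
    (AdjoinRoot.powerBasis β.charpoly_monic.ne_zero).finrank, AdjoinRoot.powerBasis_dim,
    Matrix.charpoly_natDegree_eq_dim]

end AdjoinRootCharpoly

theorem stmt10_general {O : Type*} [CommRing O] [IsDomain O] [IsDiscreteValuationRing O]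
    [IsAdicComplete (maximalIdeal O) O]
    {O' : Type*} [CommRing O'] [IsDomain O'] [IsLocalRing O'] [Algebra O O']
    (hunram : maximalIdeal O' = Ideal.map (algebraMap O O') (maximalIdeal O))
    {n : ℕ} (hn : 0 < n) (B : Module.Basis (Fin n) O O')
    (π : O) (hπ : Irreducible π)
    (α : O')
    (hαgen : ∀ y : O', ∃ q : Polynomial O, y - Polynomial.aeval α q ∈ maximalIdeal O')
    (hαsep : ∃ g : Polynomial O, g.Monic ∧ g.natDegree = n ∧
      Polynomial.aeval α g ∈ maximalIdeal O' ∧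
      (g.map (IsLocalRing.residue O)).Separable)
    (i : ℕ)
    (δ : Matrix (Fin n) (Fin n) O)
    (hδ : ∀ a b : Fin n,
      δ a b - (Algebra.leftMulMatrix B (1 + algebraMap O O' π ^ i * α)) a b
        ∈ Ideal.span {π ^ (i + 1)}) :
    IsField (Algebra.adjoin (FractionRing O)
        {(δ.map (algebraMap O (FractionRing O)))} : Subalgebra (FractionRing O)
        (Matrix (Fin n) (Fin n) (FractionRing O))) ∧
    Nonempty ((Algebra.adjoin (FractionRing O)
        {(δ.map (algebraMap O (FractionRing O)))} : Subalgebra (FractionRing O)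
        (Matrix (Fin n) (Fin n) (FractionRing O))) ≃+* FractionRing O') ∧
    (minpoly (FractionRing O) (δ.map (algebraMap O (FractionRing O)))).natDegree = n ∧
    Irreducible (minpoly (FractionRing O) (δ.map (algebraMap O (FractionRing O)))) ∧
    (minpoly (FractionRing O) (δ.map (algebraMap O (FractionRing O)))).Separable := by
  have : IsLocalHom (algebraMap O O') := ((local_hom_TFAE _).out 2 0).mp hunram.ge
  have := Module.Finite.of_basis B
  have := Module.Free.of_basis B
  have := isAdicComplete_maximalIdeal_of_basis hunram B
  have : FaithfulSMul O O' :=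
    (faithfulSMul_iff_algebraMap_injective O O').mpr B.algebraMap_injective
  have : Nonempty (Fin n) := ⟨⟨0, hn⟩⟩
  rw [map_add, map_one, ← map_pow, ← Algebra.smul_def, map_smul] at hδ
  obtain ⟨β, rfl, E, hβ⟩ := Matrix.exists_eq_one_add_pow_smul hδ
  have hfres := charpoly_map_residue_eq_minpoly hunram hαgen B (β := β) <| by
    rw [hβ, Matrix.map_add _ (map_add _), Matrix.map_smul' _ _ _ (map_mul _),
      (residue_eq_zero_iff π).mpr ((mem_maximalIdeal _).mpr hπ.not_isUnit), zero_smul, add_zero]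
  have hsep : (minpoly (ResidueField O) (residue O' α)).Separable := by
    obtain ⟨g, hgm, hgd, hgα, hgsep⟩ := hαsep
    rwa [map_residue_eq_minpoly hunram hαgen hgm
      (by rw [hgd, Module.finrank_eq_card_basis B, Fintype.card_fin]) hgα] at hgsep
  obtain ⟨a, hfa, hadj⟩ :=
    exists_aeval_eq_zero_adjoin_eq_top hunram hαgen β.charpoly_monic hfres hsep
  obtain ⟨hirrL, hsepL⟩ := β.charpoly_monic.irreducible_separable_map_fractionRing (residue O)
    (hfres ▸ minpoly.irreducible (.of_finite _ _)) (hfres ▸ hsep)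
  obtain ⟨e'⟩ := nonempty_adjoinRoot_ringEquiv_fractionRing hadj hfa hirrL
  rw [← Matrix.charpoly_map] at hirrL hsepL e'
  obtain ⟨hfield, ⟨e⟩, hdeg, hirr, hsep⟩ :=
    Matrix.adjoin_one_add_smul_of_separable_charpoly hirrL hsepL (d := algebraMap O _ (π ^ i))
      (by simpa using pow_ne_zero i hπ.ne_zero)
  rw [Matrix.map_add _ (map_add _), Matrix.map_one _ (map_zero _) (map_one _),
    Matrix.map_smul' _ _ _ (map_mul _)]
  exact ⟨hfield, ⟨e.toRingEquiv.trans e'⟩, hdeg.trans (Fintype.card_fin n), hirr, hsep⟩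

/-- Let `O` be a complete discrete valuation ring with fraction field `L := Frac O`,
uniformizer `π` and residue field `k`. Let `O'` be the valuation ring of an unramified
extension `L'/L` of degree `n`: `O'` is a local domain, free of rank `n` over `O` (with
basis `B`), whose maximal ideal is generated by that of `O`, and whose residue field `k'`
is generated over `k` by the residue class of `α ∈ O'`, which is separable of degree `n`
over `k`. Regard `O' ⊆ Mat_n(O)` via the (left) regular representation in the basis `B`.
Then for every `i ≥ 1` and every `δ ∈ Mat_n(O)` with `δ ≡ 1 + π^i α (mod π^{i+1})`,
the `L`-subalgebra of `Mat_n(L)` generated by `δ` is a field isomorphic to `L'`;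
in particular `δ` has `n` distinct eigenvalues generating an extension of degree `n`
of `L` (its minimal polynomial is irreducible and separable of degree `n`). -/
theorem stmt10 {O : Type*} [CommRing O] [IsDomain O] [IsDiscreteValuationRing O]
    [IsAdicComplete (maximalIdeal O) O]
    {O' : Type*} [CommRing O'] [IsDomain O'] [IsLocalRing O'] [Algebra O O']
    (hunram : maximalIdeal O' = Ideal.map (algebraMap O O') (maximalIdeal O))
    {n : ℕ} (hn : 0 < n) (B : Module.Basis (Fin n) O O')
    (π : O) (hπ : Irreducible π)
    (α : O')
    (hαgen : ∀ y : O', ∃ q : Polynomial O, y - Polynomial.aeval α q ∈ maximalIdeal O')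
    (hαsep : ∃ g : Polynomial O, g.Monic ∧ g.natDegree = n ∧
      Polynomial.aeval α g ∈ maximalIdeal O' ∧
      (g.map (IsLocalRing.residue O)).Separable)
    (i : ℕ) (hi : 1 ≤ i)
    (δ : Matrix (Fin n) (Fin n) O)
    (hδ : ∀ a b : Fin n,
      δ a b - (Algebra.leftMulMatrix B (1 + algebraMap O O' π ^ i * α)) a b
        ∈ Ideal.span {π ^ (i + 1)}) :
    IsField (Algebra.adjoin (FractionRing O)
        {(δ.map (algebraMap O (FractionRing O)))} : Subalgebra (FractionRing O)
        (Matrix (Fin n) (Fin n) (FractionRing O))) ∧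
    Nonempty ((Algebra.adjoin (FractionRing O)
        {(δ.map (algebraMap O (FractionRing O)))} : Subalgebra (FractionRing O)
        (Matrix (Fin n) (Fin n) (FractionRing O))) ≃+* FractionRing O') ∧
    (minpoly (FractionRing O) (δ.map (algebraMap O (FractionRing O)))).natDegree = n ∧
    Irreducible (minpoly (FractionRing O) (δ.map (algebraMap O (FractionRing O)))) ∧
    (minpoly (FractionRing O) (δ.map (algebraMap O (FractionRing O)))).Separable :=
  stmt10_general hunram hn B π hπ α hαgen hαsep i δ hδ
end

section
/- Let M be an 𝔽_p[t]-module with a degree function deg : M → ℤ ∪ {-∞} satisfying deg(a·m) = δ·deg_t(a) + deg(m) (δ > 0 a fixed integer) and deg(m+m') ≤ max(deg m, deg m'). For d ∈ ℤ let M_d be the submodule generated by {m ∈ M : deg(m) ≤ d}. Suppose M has an orthogonal basis m₁, …, m_n (i.e. deg(Σ a_i m_i) = max_i deg(a_i m_i) for all a_i ∈ 𝔽_p[t], and the m_i generate M). If M_d has finite index in M (i.e. M/M_d is a finite set), then M_d = M. -/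
/-!
Orthogonality makes the basis linearly independent and forces every `m` with `deg m ≤ d` to be a
combination of the basis vectors of degree `≤ d` only, because multiplying by a nonzero
coefficient never lowers the degree. So `M_d` lies in the span of those basis vectors. If some
`b j` had degree `> d`, the line `𝔽_p[t] • b j` would inject into `M / M_d`, which is then
infinite.
-/

open Submodule

theorem Polynomial.deg_le_deg_smul_of_ne_zero {R M : Type*} [Semiring R] [AddCommMonoid M]
    [Module (Polynomial R) M] {deg : M → WithBot ℤ} {δ : ℤ} (hδ : 0 ≤ δ)
    (hdeg : ∀ (a : Polynomial R) (m : M),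
      deg (a • m) = (a.degree.map fun k : ℕ => δ * (k : ℤ)) + deg m)
    {a : Polynomial R} (ha : a ≠ 0) (m : M) : deg m ≤ deg (a • m) := by
  have hshift : (0 : WithBot ℤ) ≤ a.degree.map fun k : ℕ => δ * (k : ℤ) := by
    rw [Polynomial.degree_eq_natDegree ha, Nat.cast_withBot, WithBot.map_coe]
    exact_mod_cast mul_nonneg hδ (Int.natCast_nonneg _)
  rw [hdeg]
  simpa using add_le_add_left hshift (deg m)

section Orthogonal

variable {R M α ι : Type*} [Ring R] [AddCommGroup M] [Module R M] [LinearOrder α] [OrderBot α]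
  [Fintype ι] {deg : M → α} {b : ι → M}

theorem linearIndependent_of_orthogonal
    (hmono : ∀ (a : R) (m : M), a ≠ 0 → deg m ≤ deg (a • m))
    (hbot : ∀ m : M, deg m = ⊥ ↔ m = 0) (hne : ∀ i, b i ≠ 0)
    (horth : ∀ a : ι → R, deg (∑ i, a i • b i) = Finset.univ.sup fun i => deg (a i • b i)) :
    LinearIndependent R b := by
  rw [Fintype.linearIndependent_iff]
  intro a hsum i
  have hsup : (Finset.univ.sup fun i => deg (a i • b i)) = ⊥ := by
    rw [← horth, hsum, (hbot 0).mpr rfl]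
  have hterm : deg (a i • b i) = ⊥ := le_bot_iff.mp ((Finset.le_sup (Finset.mem_univ i)).trans_eq hsup)
  by_contra ha
  exact hne i ((hbot _).mp (le_bot_iff.mp (hterm ▸ hmono _ _ ha)))

theorem span_deg_le_le_span_image_of_orthogonal
    (hmono : ∀ (a : R) (m : M), a ≠ 0 → deg m ≤ deg (a • m))
    (horth : ∀ a : ι → R, deg (∑ i, a i • b i) = Finset.univ.sup fun i => deg (a i • b i))
    (hgen : span R (Set.range b) = ⊤) (d : α) :
    span R {m | deg m ≤ d} ≤ span R (b '' {i | deg (b i) ≤ d}) := by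
  rw [span_le]
  intro m hm
  obtain ⟨c, rfl⟩ := (mem_span_range_iff_exists_fun R).mp (hgen ▸ mem_top : m ∈ span R _)
  have hterm : ∀ i, deg (c i • b i) ≤ d := fun i =>
    Finset.sup_le_iff.mp ((horth c).symm.trans_le hm) i (Finset.mem_univ i)
  refine sum_mem fun i _ => ?_
  by_cases hi : deg (b i) ≤ d
  · exact smul_mem _ _ (subset_span ⟨i, hi, rfl⟩)
  · have hc : c i = 0 := by
      by_contra hc
      exact hi ((hmono _ _ hc).trans (hterm i))
    simp [hc]

end Orthogonal

theorem LinearIndependent.infinite_quotient_span_image {R M ι : Type*} [Ring R] [Infinite R]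
    [AddCommGroup M] [Module R M] {b : ι → M} (hb : LinearIndependent R b) {s : Set ι} {j : ι}
    (hj : j ∉ s) : Infinite (M ⧸ span R (b '' s)) := by
  refine Infinite.of_injective (fun a : R => (span R (b '' s)).mkQ (a • b j)) ?_
  intro a a' h
  have hmem : (a - a') • b j ∈ span R (b '' s) := by
    rw [sub_smul]
    exact (Submodule.Quotient.eq _).mp h
  have hsub : b '' s ⊆ b '' (Set.univ \ {j}) :=
    Set.image_mono fun i hi => ⟨trivial, fun hij => hj (hij ▸ hi)⟩
  exact sub_eq_zero.mp (hb.eq_zero_of_smul_mem_span j _ (span_mono hsub hmem))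

theorem stmt16_general {p : ℕ} [Fact p.Prime] {M : Type*} [AddCommGroup M]
    [Module (Polynomial (ZMod p)) M]
    (deg : M → WithBot ℤ) (δ : ℤ) (hδ : 0 < δ)
    (hdeg : ∀ (a : Polynomial (ZMod p)) (m : M),
      deg (a • m) = (a.degree.map fun k : ℕ => δ * (k : ℤ)) + deg m)
    (h0 : ∀ m : M, deg m = ⊥ ↔ m = 0)
    {n : ℕ} (b : Fin n → M) (hne : ∀ i, b i ≠ 0)
    (horth : ∀ a : Fin n → Polynomial (ZMod p),
      deg (∑ i, a i • b i) = Finset.univ.sup fun i => deg (a i • b i))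
    (hgen : Submodule.span (Polynomial (ZMod p)) (Set.range b) = ⊤)
    (d : ℤ)
    (hfin : Finite
      (M ⧸ Submodule.span (Polynomial (ZMod p)) {m : M | deg m ≤ (d : WithBot ℤ)})) :
    Submodule.span (Polynomial (ZMod p)) {m : M | deg m ≤ (d : WithBot ℤ)} = ⊤ := by
  have hmono : ∀ (a : Polynomial (ZMod p)) (m : M), a ≠ 0 → deg m ≤ deg (a • m) :=
    fun _ m ha => Polynomial.deg_le_deg_smul_of_ne_zero hδ.le hdeg ha m
  by_cases hall : ∀ i, deg (b i) ≤ (d : WithBot ℤ)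
  · rw [eq_top_iff, ← hgen, span_le]
    rintro _ ⟨i, rfl⟩
    exact subset_span (hall i)
  obtain ⟨j, hj⟩ := not_forall.mp hall
  set N := span (Polynomial (ZMod p)) (b '' {i | deg (b i) ≤ (d : WithBot ℤ)})
  have : Finite (M ⧸ N) := Finite.of_surjective _
    (factor_surjective (span_deg_le_le_span_image_of_orthogonal hmono horth hgen _))
  have : Infinite (M ⧸ N) :=
    (linearIndependent_of_orthogonal hmono h0 hne horth).infinite_quotient_span_image hj
  exact (not_finite (M ⧸ N)).elim

/-- Let `M` be an `𝔽_p[t]`-module with a degree function `deg : M → ℤ ∪ {-∞}`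
satisfying `deg (a • m) = δ · deg_t a + deg m` (`δ > 0` fixed, `deg m = -∞` iff
`m = 0`) and `deg (m + m') ≤ max (deg m) (deg m')`. For `d ∈ ℤ` let `M_d` be the
submodule generated by `{m : deg m ≤ d}`. Suppose `M` has an orthogonal basis
`m₁, …, m_n`. If `M_d` has finite index in `M`, then `M_d = M`. -/
theorem stmt16 {p : ℕ} [Fact p.Prime] {M : Type*} [AddCommGroup M]
    [Module (Polynomial (ZMod p)) M]
    (deg : M → WithBot ℤ) (δ : ℤ) (hδ : 0 < δ)
    (hdeg : ∀ (a : Polynomial (ZMod p)) (m : M),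
      deg (a • m) = (a.degree.map fun k : ℕ => δ * (k : ℤ)) + deg m)
    (hadd : ∀ m m' : M, deg (m + m') ≤ max (deg m) (deg m'))
    (h0 : ∀ m : M, deg m = ⊥ ↔ m = 0)
    {n : ℕ} (b : Fin n → M) (hne : ∀ i, b i ≠ 0)
    (horth : ∀ a : Fin n → Polynomial (ZMod p),
      deg (∑ i, a i • b i) = Finset.univ.sup fun i => deg (a i • b i))
    (hgen : Submodule.span (Polynomial (ZMod p)) (Set.range b) = ⊤)
    (d : ℤ)
    (hfin : Finite
      (M ⧸ Submodule.span (Polynomial (ZMod p)) {m : M | deg m ≤ (d : WithBot ℤ)})) :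
    Submodule.span (Polynomial (ZMod p)) {m : M | deg m ≤ (d : WithBot ℤ)} = ⊤ :=
  stmt16_general deg δ hδ hdeg h0 b hne horth hgen d hfin
end
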